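/- arXiv:math/0202045 — 2 statements merged into one kernel-verified Lean document; each statement's English description precedes it below -/
import Mathlib

section
/- If a three-dimensional subspace A of R^7 = Im(O) is closed under the octonion cross product (u, v ∈ A implies u × v ∈ A), and B is another three-dimensional subspace closed under the cross product, then the intersection A ∩ B cannot have dimension exactly 2. -/
/- STATEMENT 4: If A and B are three-dimensional subspaces of Im(O) ⊂ O each closed under
the octonion cross product u × v = Im(u·v), then A ∩ B cannot have dimension exactly 2. -/

open scoped Quaternion

/-- The octonions, as pairs of quaternions (Cayley–Dickson construction). -/
abbrev Oct := ℍ[ℝ] × ℍ[ℝ]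

/-- Octonion multiplication (Cayley–Dickson): (a,b)(c,d) = (ac − d̄b, da + bc̄). -/
noncomputable def omul (u v : Oct) : Oct :=
  (u.1 * v.1 - star v.2 * u.2, v.2 * u.1 + u.2 * star v.1)

/-- Real part of an octonion. -/
def ore (u : Oct) : ℝ := u.1.re

/-- The octonion unit. -/
noncomputable def oone : Oct := (1, 0)

/-- Imaginary part of an octonion. -/
noncomputable def oim (u : Oct) : Oct := u - ore u • oone

/-- An octonion is imaginary if its real part vanishes. -/
def IsIm (u : Oct) : Prop := ore u = 0

/-- Cross product on imaginary octonions: u × v = Im(u·v). -/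
noncomputable def ocross (u v : Oct) : Oct := oim (omul u v)

/-! ### Auxiliary: the standard Euclidean dot product on `Oct = ℝ⁸` and basic identities. -/

/-- The Euclidean dot product on the octonions viewed as `ℝ⁸`. -/
def dotO (x y : Oct) : ℝ :=
  x.1.re*y.1.re + x.1.imI*y.1.imI + x.1.imJ*y.1.imJ + x.1.imK*y.1.imK +
  x.2.re*y.2.re + x.2.imI*y.2.imI + x.2.imJ*y.2.imJ + x.2.imK*y.2.imK

attribute [local simp] Quaternion.re_mul Quaternion.imI_mul Quaternion.imJ_mul Quaternion.imK_mul

lemma dotO_symm (x y : Oct) : dotO x y = dotO y x := by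
  simp only [dotO]; ring

lemma dotO_comb (a b c : ℝ) (x y z t : Oct) :
    dotO (a • x + b • y + c • z) t = a * dotO x t + b * dotO y t + c * dotO z t := by
  simp only [dotO, Prod.fst_add, Prod.snd_add, Prod.smul_fst, Prod.smul_snd,
    Quaternion.re_add, Quaternion.imI_add, Quaternion.imJ_add, Quaternion.imK_add,
    Quaternion.re_smul, Quaternion.imI_smul, Quaternion.imJ_smul, Quaternion.imK_smul,
    smul_eq_mul]
  ring

lemma dotO_self_pos (x : Oct) (hx : x ≠ 0) : 0 < dotO x x := by
  have hexp : dotO x x = x.1.re^2 + x.1.imI^2 + x.1.imJ^2 + x.1.imK^2 +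
      x.2.re^2 + x.2.imI^2 + x.2.imJ^2 + x.2.imK^2 := by
    simp only [dotO]; ring
  rcases lt_or_ge 0 (dotO x x) with h | h
  · exact h
  · exfalso
    rw [hexp] at h
    apply hx
    have q1 := sq_nonneg x.1.re
    have q2 := sq_nonneg x.1.imI
    have q3 := sq_nonneg x.1.imJ
    have q4 := sq_nonneg x.1.imK
    have q5 := sq_nonneg x.2.re
    have q6 := sq_nonneg x.2.imI
    have q7 := sq_nonneg x.2.imJ
    have q8 := sq_nonneg x.2.imK
    have h1 : x.1.re = 0 := pow_eq_zero_iff two_ne_zero |>.mp (le_antisymm (by linarith) q1)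
    have h2 : x.1.imI = 0 := pow_eq_zero_iff two_ne_zero |>.mp (le_antisymm (by linarith) q2)
    have h3 : x.1.imJ = 0 := pow_eq_zero_iff two_ne_zero |>.mp (le_antisymm (by linarith) q3)
    have h4 : x.1.imK = 0 := pow_eq_zero_iff two_ne_zero |>.mp (le_antisymm (by linarith) q4)
    have h5 : x.2.re = 0 := pow_eq_zero_iff two_ne_zero |>.mp (le_antisymm (by linarith) q5)
    have h6 : x.2.imI = 0 := pow_eq_zero_iff two_ne_zero |>.mp (le_antisymm (by linarith) q6)
    have h7 : x.2.imJ = 0 := pow_eq_zero_iff two_ne_zero |>.mp (le_antisymm (by linarith) q7)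
    have h8 : x.2.imK = 0 := pow_eq_zero_iff two_ne_zero |>.mp (le_antisymm (by linarith) q8)
    have e1 : x.1 = 0 := by ext <;> simp [h1, h2, h3, h4]
    have e2 : x.2 = 0 := by ext <;> simp [h5, h6, h7, h8]
    exact Prod.ext e1 e2

/-- The cross product of imaginary octonions is orthogonal to the first factor. -/
lemma dot_cross_left (u v : Oct) (hu : IsIm u) (hv : IsIm v) : dotO (ocross u v) u = 0 := by
  have hu' : u.1.re = 0 := hu
  have hv' : v.1.re = 0 := hv
  simp [dotO, ocross, oim, ore, oone, omul, hu', hv']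
  ring

/-- The cross product of imaginary octonions is orthogonal to the second factor. -/
lemma dot_cross_right (u v : Oct) (hu : IsIm u) (hv : IsIm v) : dotO (ocross u v) v = 0 := by
  have hu' : u.1.re = 0 := hu
  have hv' : v.1.re = 0 := hv
  simp [dotO, ocross, oim, ore, oone, omul, hu', hv']
  ring

/-- Alternativity: for imaginary `u`, `u(uv) = -(|u|²) v`. -/
lemma omul_omul_self (u v : Oct) (hu : IsIm u) :
    omul u (omul u v) = (-(dotO u u)) • v := by
  have hu' : u.1.re = 0 := hu
  have e1 : (omul u (omul u v)).1 = ((-(dotO u u)) • v).1 := by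
    ext <;> (simp only [dotO, omul, Prod.smul_fst, Prod.smul_snd, Quaternion.re_mul,
      Quaternion.imI_mul, Quaternion.imJ_mul, Quaternion.imK_mul, Quaternion.re_star,
      Quaternion.imI_star, Quaternion.imJ_star, Quaternion.imK_star, Quaternion.re_sub,
      Quaternion.imI_sub, Quaternion.imJ_sub, Quaternion.imK_sub, Quaternion.re_add,
      Quaternion.imI_add, Quaternion.imJ_add, Quaternion.imK_add, Quaternion.re_neg,
      Quaternion.imI_neg, Quaternion.imJ_neg, Quaternion.imK_neg, Quaternion.re_smul,
      Quaternion.imI_smul, Quaternion.imJ_smul, Quaternion.imK_smul, smul_eq_mul, hu']; ring)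
  have e2 : (omul u (omul u v)).2 = ((-(dotO u u)) • v).2 := by
    ext <;> (simp only [dotO, omul, Prod.smul_fst, Prod.smul_snd, Quaternion.re_mul,
      Quaternion.imI_mul, Quaternion.imJ_mul, Quaternion.imK_mul, Quaternion.re_star,
      Quaternion.imI_star, Quaternion.imJ_star, Quaternion.imK_star, Quaternion.re_sub,
      Quaternion.imI_sub, Quaternion.imJ_sub, Quaternion.imK_sub, Quaternion.re_add,
      Quaternion.imI_add, Quaternion.imJ_add, Quaternion.imK_add, Quaternion.re_neg,
      Quaternion.imI_neg, Quaternion.imJ_neg, Quaternion.imK_neg, Quaternion.re_smul,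
      Quaternion.imI_smul, Quaternion.imJ_smul, Quaternion.imK_smul, smul_eq_mul, hu']; ring)
  exact Prod.ext e1 e2

lemma omul_oone (u : Oct) : omul u oone = u := by
  refine Prod.ext ?_ ?_ <;> simp [omul, oone]

lemma omul_smul (r : ℝ) (u v : Oct) : omul u (r • v) = r • omul u v := by
  refine Prod.ext ?_ ?_ <;> simp [omul, Prod.smul_fst, Prod.smul_snd, smul_sub, smul_add,
    mul_smul_comm, smul_mul_assoc]

/-- Two 3-dimensional subspaces of the imaginary octonions, each closed under the cross
product (associative 3-planes), never meet in dimension exactly 2. -/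
theorem associative_planes_intersection_ne_two (A B : Submodule ℝ Oct)
    (hAim : ∀ x ∈ A, IsIm x) (hBim : ∀ x ∈ B, IsIm x)
    (hAdim : Module.finrank ℝ A = 3) (hBdim : Module.finrank ℝ B = 3)
    (hAcl : ∀ u ∈ A, ∀ v ∈ A, ocross u v ∈ A)
    (hBcl : ∀ u ∈ B, ∀ v ∈ B, ocross u v ∈ B) :
    Module.finrank ℝ ↥(A ⊓ B) ≠ 2 := by
  intro h2
  set W : Submodule ℝ Oct := A ⊓ B with hWdef
  let b : Module.Basis (Fin 2) ℝ W := Module.finBasisOfFinrankEq ℝ W h2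
  have hbi : LinearIndependent ℝ (fun i : Fin 2 => ((b i : W) : Oct)) :=
    b.linearIndependent.map' W.subtype (Submodule.ker_subtype W)
  set u : Oct := ((b 0 : W) : Oct) with hudef
  set v : Oct := ((b 1 : W) : Oct) with hvdef
  have huW : u ∈ W := (b 0).2
  have hvW : v ∈ W := (b 1).2
  have hu_im : IsIm u := hAim u huW.1
  have hv_im : IsIm v := hAim v hvW.1
  set w : Oct := ocross u v with hwdef
  have hwW : w ∈ W := ⟨hAcl u huW.1 v hvW.1, hBcl u huW.2 v hvW.2⟩
  -- linear independence of the pair (u, v)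
  have hpair : ∀ a c : ℝ, a • u + c • v = 0 → a = 0 ∧ c = 0 := by
    intro a c h
    have hs : ∑ i : Fin 2, (![a, c] : Fin 2 → ℝ) i • ((b i : W) : Oct) = 0 := by
      rw [Fin.sum_univ_two]
      simp only [Matrix.cons_val_zero, Matrix.cons_val_one, Matrix.head_cons]
      exact h
    have := Fintype.linearIndependent_iff.mp hbi ![a, c] hs
    exact ⟨this 0, this 1⟩
  have hune : u ≠ 0 := LinearIndependent.ne_zero 0 hbi
  have hupos : 0 < dotO u u := dotO_self_pos u hune
  -- the cross product w is nonzero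
  have hw0 : w ≠ 0 := by
    intro h0
    set r : ℝ := ore (omul u v) with hr
    have hmv : omul u v = r • oone := by
      have h0' : omul u v - r • oone = 0 := h0
      exact sub_eq_zero.mp h0'
    have h1 : omul u (omul u v) = r • u := by
      rw [hmv, omul_smul, omul_oone]
    have hcomb : r • u + dotO u u • v = 0 := by
      have h3 : r • u = (-(dotO u u)) • v :=
        h1.symm.trans (omul_omul_self u v hu_im)
      rw [h3, neg_smul]
      exact neg_add_cancel _
    obtain ⟨-, hd0⟩ := hpair _ _ hcomb
    exact hupos.ne' hd0
  have hwpos : 0 < dotO w w := dotO_self_pos w hw0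
  have ho_u : dotO w u = 0 := dot_cross_left u v hu_im hv_im
  have ho_v : dotO w v = 0 := dot_cross_right u v hu_im hv_im
  -- u, v, w are linearly independent in Oct
  have hli : LinearIndependent ℝ (fun i : Fin 3 => (![u, v, w] : Fin 3 → Oct) i) := by
    rw [Fintype.linearIndependent_iff]
    intro g hg
    have hg' : g 0 • u + g 1 • v + g 2 • w = 0 := by
      simpa [Fin.sum_univ_three] using hg
    have hdot : dotO (g 0 • u + g 1 • v + g 2 • w) w = 0 := by
      rw [hg']; simp [dotO]
    rw [dotO_comb] at hdot
    rw [dotO_symm u w, ho_u, dotO_symm v w, ho_v] at hdot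
    have hg2 : g 2 = 0 := by
      have : g 2 * dotO w w = 0 := by linarith
      rcases mul_eq_zero.mp this with h | h
      · exact h
      · exact absurd h hwpos.ne'
    have hg01 : g 0 • u + g 1 • v = 0 := by
      rw [hg2, zero_smul, add_zero] at hg'
      exact hg'
    obtain ⟨hg0, hg1⟩ := hpair _ _ hg01
    intro i
    fin_cases i <;> assumption
  -- transfer to W, contradicting finrank W = 2
  have hcomp : (W.subtype ∘ (![⟨u, huW⟩, ⟨v, hvW⟩, ⟨w, hwW⟩] : Fin 3 → W)) =
      (fun i : Fin 3 => (![u, v, w] : Fin 3 → Oct) i) := by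
    funext i; fin_cases i <;> rfl
  have hliW : LinearIndependent ℝ (![⟨u, huW⟩, ⟨v, hvW⟩, ⟨w, hwW⟩] : Fin 3 → W) :=
    LinearIndependent.of_comp W.subtype (hcomp ▸ hli)
  have hcard := hliW.fintype_card_le_finrank
  rw [h2, Fintype.card_fin] at hcard
  omega
end

section
/- Let C ⊂ R^7 = R^3_x × R^4_y be the 4-dimensional submanifold given by x³ = 0, y⁰ = B⁰(x¹,x²), y³ = B³(x¹,x²) for smooth functions B⁰, B³. Then C is coassociative (Ω restricts to zero on C) if and only if −∂B³/∂x² + ∂B⁰/∂x¹ = 0 and ∂B³/∂x¹ + ∂B⁰/∂x² = 0. -/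
/- STATEMENT 9: The 4-submanifold C ⊂ ℝ⁷ given by x³ = 0, y⁰ = B⁰(x¹,x²), y³ = B³(x¹,x²)
is coassociative (the pullback of Ω to C vanishes) iff −∂₂B³ + ∂₁B⁰ = 0 and
∂₁B³ + ∂₂B⁰ = 0.  Coordinates on ℝ⁷: x¹x²x³ = 0,1,2 and y⁰y¹y²y³ = 3,4,5,6; C is
parametrized by (x¹,x²,y¹,y²). -/

open Finset

abbrev Form (n : ℕ) := Finset (Fin n) → ℝ
abbrev FormF (n : ℕ) := (Fin n → ℝ) → Form n

def invCount {n : ℕ} (A B : Finset (Fin n)) : ℕ :=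
  ∑ a ∈ A, (B.filter (fun b => b < a)).card

noncomputable def wedge {n : ℕ} (α β : Form n) : Form n :=
  fun S => ∑ A ∈ S.powerset, (-1 : ℝ) ^ invCount A (S \ A) * α A * β (S \ A)

def dxm {n : ℕ} (A : Finset (Fin n)) : Form n := fun S => if S = A then 1 else 0

noncomputable def stdOmega : Form 7 :=
  dxm {0,1,2}
    - wedge (dxm {0}) (dxm {5,6} - dxm {3,4})
    - wedge (dxm {1}) (-(dxm {4,6}) - dxm {3,5})
    - wedge (dxm {2}) (dxm {4,5} - dxm {3,6})

/-- Jacobian matrix of a map ℝᵏ → ℝⁿ. -/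
noncomputable def jacobian {k n : ℕ} (φ : (Fin k → ℝ) → (Fin n → ℝ)) (x : Fin k → ℝ) :
    Matrix (Fin n) (Fin k) ℝ := fun i j => fderiv ℝ φ x (Pi.single j 1) i

/-- The minor of J with rows T and columns S (indices in increasing order). -/
noncomputable def minorDet {k n : ℕ} (J : Matrix (Fin n) (Fin k) ℝ)
    (T : Finset (Fin n)) (S : Finset (Fin k)) : ℝ :=
  if h : S.card = T.card then
    Matrix.det (Matrix.of fun i j : Fin T.card =>
      J ((T.orderIsoOfFin rfl i : Fin n)) ((S.orderIsoOfFin h j : Fin k)))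
  else 0

/-- Pullback of a constant-coefficient form on ℝⁿ along φ : ℝᵏ → ℝⁿ. -/
noncomputable def pullback {k n : ℕ} (φ : (Fin k → ℝ) → (Fin n → ℝ)) (α : Form n) :
    FormF k := fun x S => ∑ T : Finset (Fin n), α T * minorDet (jacobian φ x) T S

/-- Partial derivative of a scalar function. -/
noncomputable def pd {k : ℕ} (g : (Fin k → ℝ) → ℝ) (i : Fin k) (x : Fin k → ℝ) : ℝ :=
  fderiv ℝ g x (Pi.single i 1)

/-! ### Auxiliary material -/

section Aux

open Matrix ContinuousLinearMap

noncomputable def LL : (Fin 4 → ℝ) →L[ℝ] (Fin 2 → ℝ) :=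
  ContinuousLinearMap.pi ![ContinuousLinearMap.proj 0, ContinuousLinearMap.proj 1]

lemma Lap (x : Fin 4 → ℝ) : LL x = ![x 0, x 1] := by
  funext i; fin_cases i <;> simp [LL]

lemma Lsingle0 : LL (Pi.single (0 : Fin 4) (1:ℝ)) = Pi.single (0 : Fin 2) 1 := by
  funext i; fin_cases i <;> simp [Lap]
lemma Lsingle1 : LL (Pi.single (1 : Fin 4) (1:ℝ)) = Pi.single (1 : Fin 2) 1 := by
  funext i; fin_cases i <;> simp [Lap, Pi.single_eq_of_ne]
lemma Lsingle2 : LL (Pi.single (2 : Fin 4) (1:ℝ)) = 0 := by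
  funext i; fin_cases i <;> simp [Lap, Pi.single_eq_of_ne]
lemma Lsingle3 : LL (Pi.single (3 : Fin 4) (1:ℝ)) = 0 := by
  funext i; fin_cases i <;> simp [Lap, Pi.single_eq_of_ne]

lemma fin75 : (5 : Fin 7) = (4 : Fin 6).succ := rfl
lemma fin76 : (6 : Fin 7) = (5 : Fin 6).succ := rfl
lemma fin65 : (5 : Fin 6) = (4 : Fin 5).succ := rfl
lemma sing20 : Pi.single (0 : Fin 2) (1:ℝ) = ![1,0] := by
  funext i; fin_cases i <;> simp [Pi.single_eq_of_ne]
lemma sing21 : Pi.single (1 : Fin 2) (1:ℝ) = ![0,1] := by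
  funext i; fin_cases i <;> simp [Pi.single_eq_of_ne]
lemma zero2 : (![0,0] : Fin 2 → ℝ) = 0 := by
  funext i; fin_cases i <;> simp

lemma jac_eval (B0 B3 : (Fin 2 → ℝ) → ℝ) (hB0 : ContDiff ℝ (⊤ : ℕ∞) B0) (hB3 : ContDiff ℝ (⊤ : ℕ∞) B3)
    (p : Fin 4 → ℝ) (i : Fin 7) (j : Fin 4) :
    jacobian (fun p => ![p 0, p 1, 0, B0 ![p 0, p 1], p 2, p 3, B3 ![p 0, p 1]]) p i j =
      ![![1,0,0,0], ![0,1,0,0], ![0,0,0,0],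
        ![pd B0 0 ![p 0, p 1], pd B0 1 ![p 0, p 1], 0, 0],
        ![0,0,1,0], ![0,0,0,1],
        ![pd B3 0 ![p 0, p 1], pd B3 1 ![p 0, p 1], 0, 0]] i j := by
  have hB0d : DifferentiableAt ℝ B0 (LL p) := (hB0.differentiable (by simp)).differentiableAt
  have hB3d : DifferentiableAt ℝ B3 (LL p) := (hB3.differentiable (by simp)).differentiableAt
  set Dfam : ∀ _ : Fin 7, (Fin 4 → ℝ) →L[ℝ] ℝ :=
    ![proj 0, proj 1, 0, ((fderiv ℝ B0 (LL p)).comp LL), proj 2, proj 3,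
      ((fderiv ℝ B3 (LL p)).comp LL)] with hD
  have hcomp0 : HasFDerivAt (fun x : Fin 4 → ℝ => B0 ![x 0, x 1])
      ((fderiv ℝ B0 (LL p)).comp LL) p := by
    have h := (hB0d.hasFDerivAt.comp p LL.hasFDerivAt)
    have heq : (fun x : Fin 4 → ℝ => B0 ![x 0, x 1]) = (B0 ∘ LL) := by
      funext x; simp [Lap]
    rw [heq]; exact h
  have hcomp3 : HasFDerivAt (fun x : Fin 4 → ℝ => B3 ![x 0, x 1])
      ((fderiv ℝ B3 (LL p)).comp LL) p := by
    have h := (hB3d.hasFDerivAt.comp p LL.hasFDerivAt)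
    have heq : (fun x : Fin 4 → ℝ => B3 ![x 0, x 1]) = (B3 ∘ LL) := by
      funext x; simp [Lap]
    rw [heq]; exact h
  have key : HasFDerivAt (fun p : Fin 4 → ℝ => ![p 0, p 1, 0, B0 ![p 0, p 1], p 2, p 3, B3 ![p 0, p 1]])
      (ContinuousLinearMap.pi Dfam) p := by
    apply hasFDerivAt_pi''
    intro i
    have hproj : ∀ (m : Fin 7), (proj m).comp (ContinuousLinearMap.pi Dfam) = Dfam m := by
      intro m; ext v; simp
    rw [hproj]
    fin_cases i
    · exact hasFDerivAt_apply 0 p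
    · exact hasFDerivAt_apply 1 p
    · exact hasFDerivAt_const 0 p
    · exact hcomp0
    · exact hasFDerivAt_apply 2 p
    · exact hasFDerivAt_apply 3 p
    · exact hcomp3
  have hf : jacobian (fun p : Fin 4 → ℝ => ![p 0, p 1, 0, B0 ![p 0, p 1], p 2, p 3, B3 ![p 0, p 1]]) p i j
      = Dfam i (Pi.single j 1) := by
    rw [jacobian, key.fderiv]; rfl
  rw [hf]
  fin_cases i <;> fin_cases j <;>
    simp [hD, pd, Lap, Lsingle0, Lsingle1, Lsingle2, Lsingle3, Pi.single_eq_of_ne, fin75,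
      fin76, fin65, Matrix.cons_val_succ, sing20, sing21, zero2, Matrix.vecHead, Matrix.vecTail]

lemma wedge_single {n : ℕ} (A : Finset (Fin n)) (β : Form n) (S : Finset (Fin n)) :
    wedge (dxm A) β S = if A ⊆ S then (-1 : ℝ)^invCount A (S \ A) * β (S \ A) else 0 := by
  unfold wedge dxm
  split_ifs with h
  · rw [Finset.sum_eq_single_of_mem A (Finset.mem_powerset.2 h)]
    · simp
    · intro b _ hb; simp [hb]
  · apply Finset.sum_eq_zero
    intro b hb
    have : b ≠ A := fun hba => h (hba ▸ Finset.mem_powerset.1 hb)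
    simp [this]

lemma sum_w (A B : Finset (Fin 7)) (m : Finset (Fin 7) → ℝ)
    (h : ∀ T : Finset (Fin 7), (A ⊆ T ∧ T \ A = B) ↔ T = A ∪ B) :
    ∑ T : Finset (Fin 7), wedge (dxm A) (dxm B) T * m T
      = (-1 : ℝ)^invCount A B * m (A ∪ B) := by
  have key : ∀ T : Finset (Fin 7), wedge (dxm A) (dxm B) T * m T
      = if T = A ∪ B then (-1 : ℝ)^invCount A B * m T else 0 := by
    intro T
    rw [wedge_single]
    by_cases hT : T = A ∪ B
    · subst hT
      have h1 := ((h _).2 rfl).1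
      have h2 := ((h _).2 rfl).2
      rw [if_pos h1, if_pos rfl, h2, dxm, if_pos rfl]
      ring
    · rw [if_neg hT]
      by_cases hA : A ⊆ T
      · have : T \ A ≠ B := fun hb => hT ((h T).1 ⟨hA, hb⟩)
        simp [hA, dxm, this]
      · simp [hA]
  rw [Finset.sum_congr rfl (fun T _ => key T), Finset.sum_ite_eq' Finset.univ (A ∪ B)]
  simp

lemma wedge_sub₂ {n : ℕ} (α β γ : Form n) (S : Finset (Fin n)) :
    wedge α (β - γ) S = wedge α β S - wedge α γ S := by
  simp [wedge, Pi.sub_apply, mul_sub, Finset.sum_sub_distrib]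

lemma wedge_neg₂ {n : ℕ} (α β : Form n) (S : Finset (Fin n)) :
    wedge α (-β) S = -wedge α β S := by
  simp [wedge, Finset.sum_neg_distrib]

set_option maxRecDepth 10000 in
lemma key_sum (m : Finset (Fin 7) → ℝ) :
    ∑ T : Finset (Fin 7), stdOmega T * m T
      = m {0,1,2} - m {0,5,6} + m {0,3,4} + m {1,4,6} + m {1,3,5} - m {2,4,5} + m {2,3,6} := by
  have e1 : ∀ T : Finset (Fin 7), stdOmega T * m T =
      dxm {0,1,2} T * m T
      - (wedge (dxm {0}) (dxm {5,6}) T * m T - wedge (dxm {0}) (dxm {3,4}) T * m T)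
      - (-(wedge (dxm {1}) (dxm {4,6}) T * m T) - wedge (dxm {1}) (dxm {3,5}) T * m T)
      - (wedge (dxm {2}) (dxm {4,5}) T * m T - wedge (dxm {2}) (dxm {3,6}) T * m T) := by
    intro T
    simp only [stdOmega, Pi.sub_apply, wedge_sub₂, wedge_neg₂]
    ring
  rw [Finset.sum_congr rfl (fun T _ => e1 T)]
  simp only [Finset.sum_sub_distrib, Finset.sum_neg_distrib]
  rw [sum_w _ _ _ (by decide), sum_w _ _ _ (by decide), sum_w _ _ _ (by decide),
    sum_w _ _ _ (by decide), sum_w _ _ _ (by decide), sum_w _ _ _ (by decide)]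
  have hd : ∑ T : Finset (Fin 7), dxm {0,1,2} T * m T = m {0,1,2} := by
    simp only [dxm, ite_mul, one_mul, zero_mul]
    rw [Finset.sum_ite_eq' Finset.univ ({0,1,2} : Finset (Fin 7))]
    simp
  rw [hd]
  have u1 : ({0} : Finset (Fin 7)) ∪ {5,6} = {0,5,6} := by decide
  have u2 : ({0} : Finset (Fin 7)) ∪ {3,4} = {0,3,4} := by decide
  have u3 : ({1} : Finset (Fin 7)) ∪ {4,6} = {1,4,6} := by decide
  have u4 : ({1} : Finset (Fin 7)) ∪ {3,5} = {1,3,5} := by decide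
  have u5 : ({2} : Finset (Fin 7)) ∪ {4,5} = {2,4,5} := by decide
  have u6 : ({2} : Finset (Fin 7)) ∪ {3,6} = {2,3,6} := by decide
  have s1 : invCount ({0} : Finset (Fin 7)) {5,6} = 0 := by decide
  have s2 : invCount ({0} : Finset (Fin 7)) {3,4} = 0 := by decide
  have s3 : invCount ({1} : Finset (Fin 7)) {4,6} = 0 := by decide
  have s4 : invCount ({1} : Finset (Fin 7)) {3,5} = 0 := by decide
  have s5 : invCount ({2} : Finset (Fin 7)) {4,5} = 0 := by decide
  have s6 : invCount ({2} : Finset (Fin 7)) {3,6} = 0 := by decide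
  rw [u1, u2, u3, u4, u5, u6, s1, s2, s3, s4, s5, s6]
  ring

lemma minorDet_ne {k n : ℕ} (J : Matrix (Fin n) (Fin k) ℝ) (T : Finset (Fin n))
    (S : Finset (Fin k)) (h : S.card ≠ T.card) : minorDet J T S = 0 := by
  rw [minorDet, dif_neg h]

lemma minor3 {k n : ℕ} (J : Matrix (Fin n) (Fin k) ℝ) (T : Finset (Fin n)) (S : Finset (Fin k))
    (hT : T.card = 3) (hS : S.card = 3) (fT : Fin 3 → Fin n) (fS : Fin 3 → Fin k)
    (hfT : ∀ x, fT x ∈ T) (hmT : StrictMono fT) (hfS : ∀ x, fS x ∈ S) (hmS : StrictMono fS) :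
    minorDet J T S = Matrix.det (Matrix.of fun i j : Fin 3 => J (fT i) (fS j)) := by
  have h : S.card = T.card := by rw [hS, hT]
  rw [minorDet, dif_pos h]
  rw [← Matrix.det_reindex_self (finCongr hT.symm).symm]
  congr 1
  ext i j
  have hme : StrictMono (fun i : Fin 3 => (finCongr hT.symm i : Fin T.card)) := by
    intro a b hab; exact hab
  have hT2 : (fun i : Fin 3 => ((T.orderIsoOfFin rfl (finCongr hT.symm i) : Fin n))) = T.orderEmbOfFin hT := by
    apply Finset.orderEmbOfFin_unique
    · intro x; exact (T.orderIsoOfFin rfl (finCongr hT.symm x)).2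
    · exact fun a b hab => (T.orderIsoOfFin rfl).strictMono (hme hab)
  have hS2 : (fun i : Fin 3 => ((S.orderIsoOfFin h (finCongr hT.symm i) : Fin k))) = S.orderEmbOfFin hS := by
    apply Finset.orderEmbOfFin_unique
    · intro x; exact (S.orderIsoOfFin h (finCongr hT.symm x)).2
    · exact fun a b hab => (S.orderIsoOfFin h).strictMono (hme hab)
  have hfT2 : fT = T.orderEmbOfFin hT := Finset.orderEmbOfFin_unique hT hfT hmT
  have hfS2 : fS = S.orderEmbOfFin hS := Finset.orderEmbOfFin_unique hS hfS hmS
  simp only [Matrix.reindex_apply, Matrix.submatrix_apply, Matrix.of_apply, Equiv.symm_symm]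
  rw [show (T.orderIsoOfFin rfl (finCongr hT.symm i) : Fin n) = fT i from by
        rw [hfT2]; exact congrFun hT2 i,
      show (S.orderIsoOfFin h (finCongr hT.symm j) : Fin k) = fS j from by
        rw [hfS2]; exact congrFun hS2 j]

set_option maxHeartbeats 1000000 in
lemma pb_eval (B0 B3 : (Fin 2 → ℝ) → ℝ) (hB0 : ContDiff ℝ (⊤ : ℕ∞) B0) (hB3 : ContDiff ℝ (⊤ : ℕ∞) B3)
    (p : Fin 4 → ℝ) (S : Finset (Fin 4)) :
    pullback (fun p => ![p 0, p 1, 0, B0 ![p 0, p 1], p 2, p 3, B3 ![p 0, p 1]]) stdOmega p S =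
      if S = {0,1,2} then pd B0 1 ![p 0, p 1] + pd B3 0 ![p 0, p 1]
      else if S = {0,1,3} then pd B3 1 ![p 0, p 1] - pd B0 0 ![p 0, p 1]
      else 0 := by
  have hJ := jac_eval B0 B3 hB0 hB3 p
  simp only [pullback]
  rw [key_sum]
  fin_cases S
  -- ∅
  · rw [minorDet_ne _ _ _ (by decide), minorDet_ne _ _ _ (by decide),
      minorDet_ne _ _ _ (by decide), minorDet_ne _ _ _ (by decide),
      minorDet_ne _ _ _ (by decide), minorDet_ne _ _ _ (by decide),
      minorDet_ne _ _ _ (by decide), if_neg (by decide), if_neg (by decide)]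
    ring
  -- {0}
  · rw [minorDet_ne _ _ _ (by decide), minorDet_ne _ _ _ (by decide),
      minorDet_ne _ _ _ (by decide), minorDet_ne _ _ _ (by decide),
      minorDet_ne _ _ _ (by decide), minorDet_ne _ _ _ (by decide),
      minorDet_ne _ _ _ (by decide), if_neg (by decide), if_neg (by decide)]
    ring
  -- {1}
  · rw [minorDet_ne _ _ _ (by decide), minorDet_ne _ _ _ (by decide),
      minorDet_ne _ _ _ (by decide), minorDet_ne _ _ _ (by decide),
      minorDet_ne _ _ _ (by decide), minorDet_ne _ _ _ (by decide),
      minorDet_ne _ _ _ (by decide), if_neg (by decide), if_neg (by decide)]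
    ring
  -- {0,1}
  · rw [minorDet_ne _ _ _ (by decide), minorDet_ne _ _ _ (by decide),
      minorDet_ne _ _ _ (by decide), minorDet_ne _ _ _ (by decide),
      minorDet_ne _ _ _ (by decide), minorDet_ne _ _ _ (by decide),
      minorDet_ne _ _ _ (by decide), if_neg (by decide), if_neg (by decide)]
    ring
  -- {2}
  · rw [minorDet_ne _ _ _ (by decide), minorDet_ne _ _ _ (by decide),
      minorDet_ne _ _ _ (by decide), minorDet_ne _ _ _ (by decide),
      minorDet_ne _ _ _ (by decide), minorDet_ne _ _ _ (by decide),
      minorDet_ne _ _ _ (by decide), if_neg (by decide), if_neg (by decide)]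
    ring
  -- {0,2}
  · rw [minorDet_ne _ _ _ (by decide), minorDet_ne _ _ _ (by decide),
      minorDet_ne _ _ _ (by decide), minorDet_ne _ _ _ (by decide),
      minorDet_ne _ _ _ (by decide), minorDet_ne _ _ _ (by decide),
      minorDet_ne _ _ _ (by decide), if_neg (by decide), if_neg (by decide)]
    ring
  -- {1,2}
  · rw [minorDet_ne _ _ _ (by decide), minorDet_ne _ _ _ (by decide),
      minorDet_ne _ _ _ (by decide), minorDet_ne _ _ _ (by decide),
      minorDet_ne _ _ _ (by decide), minorDet_ne _ _ _ (by decide),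
      minorDet_ne _ _ _ (by decide), if_neg (by decide), if_neg (by decide)]
    ring
  -- {0,1,2}
  · rw [minor3 _ _ _ (by decide) (by decide) ![0,1,2] ![0,1,2] (by decide) (by decide) (by decide) (by decide),
      minor3 _ _ _ (by decide) (by decide) ![0,5,6] ![0,1,2] (by decide) (by decide) (by decide) (by decide),
      minor3 _ _ _ (by decide) (by decide) ![0,3,4] ![0,1,2] (by decide) (by decide) (by decide) (by decide),
      minor3 _ _ _ (by decide) (by decide) ![1,4,6] ![0,1,2] (by decide) (by decide) (by decide) (by decide),
      minor3 _ _ _ (by decide) (by decide) ![1,3,5] ![0,1,2] (by decide) (by decide) (by decide) (by decide),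
      minor3 _ _ _ (by decide) (by decide) ![2,4,5] ![0,1,2] (by decide) (by decide) (by decide) (by decide),
      minor3 _ _ _ (by decide) (by decide) ![2,3,6] ![0,1,2] (by decide) (by decide) (by decide) (by decide),
      if_pos (by decide)]
    simp only [Matrix.det_fin_three, Matrix.of_apply, Matrix.cons_val_zero, Matrix.cons_val_one,
      Matrix.head_cons, Matrix.cons_val_two, Matrix.vecTail, Matrix.vecHead, Function.comp, hJ,
      fin75, fin76, fin65, Matrix.cons_val_succ, Matrix.cons_val_three, Matrix.cons_val_four]
    ring
  -- {3}
  · rw [minorDet_ne _ _ _ (by decide), minorDet_ne _ _ _ (by decide),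
      minorDet_ne _ _ _ (by decide), minorDet_ne _ _ _ (by decide),
      minorDet_ne _ _ _ (by decide), minorDet_ne _ _ _ (by decide),
      minorDet_ne _ _ _ (by decide), if_neg (by decide), if_neg (by decide)]
    ring
  -- {0,3}
  · rw [minorDet_ne _ _ _ (by decide), minorDet_ne _ _ _ (by decide),
      minorDet_ne _ _ _ (by decide), minorDet_ne _ _ _ (by decide),
      minorDet_ne _ _ _ (by decide), minorDet_ne _ _ _ (by decide),
      minorDet_ne _ _ _ (by decide), if_neg (by decide), if_neg (by decide)]
    ring
  -- {1,3}
  · rw [minorDet_ne _ _ _ (by decide), minorDet_ne _ _ _ (by decide),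
      minorDet_ne _ _ _ (by decide), minorDet_ne _ _ _ (by decide),
      minorDet_ne _ _ _ (by decide), minorDet_ne _ _ _ (by decide),
      minorDet_ne _ _ _ (by decide), if_neg (by decide), if_neg (by decide)]
    ring
  -- {0,1,3}
  · rw [minor3 _ _ _ (by decide) (by decide) ![0,1,2] ![0,1,3] (by decide) (by decide) (by decide) (by decide),
      minor3 _ _ _ (by decide) (by decide) ![0,5,6] ![0,1,3] (by decide) (by decide) (by decide) (by decide),
      minor3 _ _ _ (by decide) (by decide) ![0,3,4] ![0,1,3] (by decide) (by decide) (by decide) (by decide),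
      minor3 _ _ _ (by decide) (by decide) ![1,4,6] ![0,1,3] (by decide) (by decide) (by decide) (by decide),
      minor3 _ _ _ (by decide) (by decide) ![1,3,5] ![0,1,3] (by decide) (by decide) (by decide) (by decide),
      minor3 _ _ _ (by decide) (by decide) ![2,4,5] ![0,1,3] (by decide) (by decide) (by decide) (by decide),
      minor3 _ _ _ (by decide) (by decide) ![2,3,6] ![0,1,3] (by decide) (by decide) (by decide) (by decide),
      if_neg (by decide), if_pos (by decide)]
    simp only [Matrix.det_fin_three, Matrix.of_apply, Matrix.cons_val_zero, Matrix.cons_val_one,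
      Matrix.head_cons, Matrix.cons_val_two, Matrix.vecTail, Matrix.vecHead, Function.comp, hJ,
      fin75, fin76, fin65, Matrix.cons_val_succ, Matrix.cons_val_three, Matrix.cons_val_four]
    ring
  -- {2,3}
  · rw [minorDet_ne _ _ _ (by decide), minorDet_ne _ _ _ (by decide),
      minorDet_ne _ _ _ (by decide), minorDet_ne _ _ _ (by decide),
      minorDet_ne _ _ _ (by decide), minorDet_ne _ _ _ (by decide),
      minorDet_ne _ _ _ (by decide), if_neg (by decide), if_neg (by decide)]
    ring
  -- {0,2,3}
  · rw [minor3 _ _ _ (by decide) (by decide) ![0,1,2] ![0,2,3] (by decide) (by decide) (by decide) (by decide),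
      minor3 _ _ _ (by decide) (by decide) ![0,5,6] ![0,2,3] (by decide) (by decide) (by decide) (by decide),
      minor3 _ _ _ (by decide) (by decide) ![0,3,4] ![0,2,3] (by decide) (by decide) (by decide) (by decide),
      minor3 _ _ _ (by decide) (by decide) ![1,4,6] ![0,2,3] (by decide) (by decide) (by decide) (by decide),
      minor3 _ _ _ (by decide) (by decide) ![1,3,5] ![0,2,3] (by decide) (by decide) (by decide) (by decide),
      minor3 _ _ _ (by decide) (by decide) ![2,4,5] ![0,2,3] (by decide) (by decide) (by decide) (by decide),
      minor3 _ _ _ (by decide) (by decide) ![2,3,6] ![0,2,3] (by decide) (by decide) (by decide) (by decide),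
      if_neg (by decide), if_neg (by decide)]
    simp only [Matrix.det_fin_three, Matrix.of_apply, Matrix.cons_val_zero, Matrix.cons_val_one,
      Matrix.head_cons, Matrix.cons_val_two, Matrix.vecTail, Matrix.vecHead, Function.comp, hJ,
      fin75, fin76, fin65, Matrix.cons_val_succ, Matrix.cons_val_three, Matrix.cons_val_four]
    ring
  -- {1,2,3}
  · rw [minor3 _ _ _ (by decide) (by decide) ![0,1,2] ![1,2,3] (by decide) (by decide) (by decide) (by decide),
      minor3 _ _ _ (by decide) (by decide) ![0,5,6] ![1,2,3] (by decide) (by decide) (by decide) (by decide),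
      minor3 _ _ _ (by decide) (by decide) ![0,3,4] ![1,2,3] (by decide) (by decide) (by decide) (by decide),
      minor3 _ _ _ (by decide) (by decide) ![1,4,6] ![1,2,3] (by decide) (by decide) (by decide) (by decide),
      minor3 _ _ _ (by decide) (by decide) ![1,3,5] ![1,2,3] (by decide) (by decide) (by decide) (by decide),
      minor3 _ _ _ (by decide) (by decide) ![2,4,5] ![1,2,3] (by decide) (by decide) (by decide) (by decide),
      minor3 _ _ _ (by decide) (by decide) ![2,3,6] ![1,2,3] (by decide) (by decide) (by decide) (by decide),
      if_neg (by decide), if_neg (by decide)]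
    simp only [Matrix.det_fin_three, Matrix.of_apply, Matrix.cons_val_zero, Matrix.cons_val_one,
      Matrix.head_cons, Matrix.cons_val_two, Matrix.vecTail, Matrix.vecHead, Function.comp, hJ,
      fin75, fin76, fin65, Matrix.cons_val_succ, Matrix.cons_val_three, Matrix.cons_val_four]
    ring
  -- {0,1,2,3}
  · rw [minorDet_ne _ _ _ (by decide), minorDet_ne _ _ _ (by decide),
      minorDet_ne _ _ _ (by decide), minorDet_ne _ _ _ (by decide),
      minorDet_ne _ _ _ (by decide), minorDet_ne _ _ _ (by decide),
      minorDet_ne _ _ _ (by decide), if_neg (by decide), if_neg (by decide)]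
    ring

end Aux

/-- C = {x³ = 0, y⁰ = B⁰(x¹,x²), y³ = B³(x¹,x²)} is coassociative iff
−∂B³/∂x² + ∂B⁰/∂x¹ = 0 and ∂B³/∂x¹ + ∂B⁰/∂x² = 0. -/
theorem coassociative_iff_cauchy_riemann
    (B0 B3 : (Fin 2 → ℝ) → ℝ) (hB0 : ContDiff ℝ (⊤ : ℕ∞) B0) (hB3 : ContDiff ℝ (⊤ : ℕ∞) B3) :
    (∀ p : Fin 4 → ℝ,
        pullback (fun p => ![p 0, p 1, 0, B0 ![p 0, p 1], p 2, p 3, B3 ![p 0, p 1]])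
          stdOmega p = 0) ↔
      ∀ q : Fin 2 → ℝ, (-pd B3 1 q + pd B0 0 q = 0) ∧ (pd B3 0 q + pd B0 1 q = 0) := by
  constructor
  · intro h q
    set p : Fin 4 → ℝ := ![q 0, q 1, 0, 0] with hp
    have hq : ![p 0, p 1] = q := by
      funext i; fin_cases i <;> simp [hp]
    have h1 := pb_eval B0 B3 hB0 hB3 p {0,1,2}
    have h2 := pb_eval B0 B3 hB0 hB3 p {0,1,3}
    rw [congrFun (h p) {0,1,2}] at h1
    rw [congrFun (h p) {0,1,3}] at h2
    rw [if_pos (by decide), hq] at h1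
    rw [if_neg (by decide), if_pos (by decide), hq] at h2
    simp only [Pi.zero_apply] at h1 h2
    constructor
    · linarith [h2]
    · linarith [h1]
  · intro h p
    funext S
    rw [pb_eval B0 B3 hB0 hB3 p S]
    have h1 := (h ![p 0, p 1]).1
    have h2 := (h ![p 0, p 1]).2
    split_ifs with hS1 hS2
    · show pd B0 1 ![p 0, p 1] + pd B3 0 ![p 0, p 1] = 0
      linarith
    · show pd B3 1 ![p 0, p 1] - pd B0 0 ![p 0, p 1] = 0
      linarith
    · rfl
end
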